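/- Let G be an equitably 3-colorable graph on n ≥ 2 vertices, and let k ≥ 2 and l ≥ 1 be integers. If 3 divides n or k = 2, then χ_=(G ∘^l C_{2k}) = 3. -/

import Mathlib

open SimpleGraph Finset

/-- The corona `G ∘ H` of two graphs: one copy of `G` and `|V(G)|` copies of `H`,
the `i`-th vertex of `G` being joined to every vertex of the `i`-th copy of `H`. -/
def SimpleGraph.corona {α β : Type*} (G : SimpleGraph α) (H : SimpleGraph β) :
    SimpleGraph (α ⊕ α × β) where
  Adj x y :=
    match x, y with
    | Sum.inl u, Sum.inl v => G.Adj u v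
    | Sum.inl u, Sum.inr (v, _) => u = v
    | Sum.inr (u, _), Sum.inl v => u = v
    | Sum.inr (u, a), Sum.inr (v, b) => u = v ∧ H.Adj a b
  symm := by
    refine ⟨?_⟩
    rintro (u | ⟨u, a⟩) (v | ⟨v, b⟩) h
    · exact h.symm
    · exact h.symm
    · exact h.symm
    · exact ⟨h.1.symm, h.2.symm⟩
  loopless := by
    refine ⟨?_⟩
    rintro (u | ⟨u, a⟩) h
    · exact G.loopless.irrefl u h
    · exact H.loopless.irrefl a h.2

universe u

/-- Vertex type of the `l`-fold corona `G ∘^l H` (with `l = 0` giving `G` itself). -/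
def coronaType (α β : Type u) : ℕ → Type u
  | 0 => α
  | l + 1 => coronaType α β l ⊕ coronaType α β l × β

instance coronaType.fintype (α β : Type u) [Fintype α] [Fintype β] :
    ∀ l, Fintype (coronaType α β l)
  | 0 => inferInstanceAs (Fintype α)
  | l + 1 =>
    letI := coronaType.fintype α β l
    inferInstanceAs (Fintype (coronaType α β l ⊕ coronaType α β l × β))

/-- The `l`-fold corona `G ∘^l H`, defined by `G ∘^0 H = G` and
`G ∘^(l+1) H = (G ∘^l H) ∘ H`. -/
def coronaPow {α β : Type u} (G : SimpleGraph α) (H : SimpleGraph β) :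
    ∀ l, SimpleGraph (coronaType α β l)
  | 0 => G
  | l + 1 => (coronaPow G H l).corona H

/-- The canonical copy of a vertex of `G` inside `G ∘^l H`. -/
def coronaBase {α : Type u} (β : Type u) : ∀ l, α → coronaType α β l
  | 0 => id
  | l + 1 => fun a => Sum.inl (coronaBase β l a)

/-- `c` is an equitable `k`-coloring of `G`: it is proper and any two color classes
differ in size by at most one. -/
def SimpleGraph.IsEquitableColoring {V : Type*} [Fintype V] (G : SimpleGraph V) {k : ℕ}
    (c : V → Fin k) : Prop :=
  (∀ ⦃u v⦄, G.Adj u v → c u ≠ c v) ∧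
    ∀ i j : Fin k,
      (Finset.univ.filter fun v => c v = i).card ≤
        (Finset.univ.filter fun v => c v = j).card + 1

/-- `G` is equitably `k`-colorable. -/
def SimpleGraph.EquitablyColorable {V : Type*} [Fintype V] (G : SimpleGraph V) (k : ℕ) : Prop :=
  ∃ c : V → Fin k, G.IsEquitableColoring c

/-- The equitable chromatic number: the least `k` such that `G` is equitably `k`-colorable. -/
noncomputable def SimpleGraph.equitableChromaticNumber {V : Type*} [Fintype V]
    (G : SimpleGraph V) : ℕ :=
  sInf {k | G.EquitablyColorable k}

/-- The maximum degree of a finite graph (no decidability assumptions). -/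
noncomputable def SimpleGraph.maxDeg {V : Type*} [Fintype V] (G : SimpleGraph V) : ℕ :=
  Finset.univ.sup fun v => (G.neighborSet v).ncard

/-!
A proper 3-colouring of `G ∘^l C_{2k}` extends to `G ∘^(l+1) C_{2k}` by colouring the cycle
hanging at `v` alternately with the two colours other than that of `v`. A colour class of size
`s` among `N` vertices then grows to `s + k (N - s) = k N - (k - 1) s`: classes of equal size
stay equal, and for `k = 2` sizes differing by at most one still do. An equitable 3-colouring of
`G` is balanced when `3 ∣ n`, so in either case the construction stays equitable. Conversely,
every vertex of `G ∘^(l-1) C_{2k}` forms a triangle with an edge of its cycle, so fewer than three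
colours never suffice.
-/

namespace SimpleGraph

open Finset

section Corona

variable {α β : Type u} {G : SimpleGraph α} {H : SimpleGraph β}

theorem corona_not_cliqueFree_three [Nonempty α] {a b : β} (hab : H.Adj a b) :
    ¬(G.corona H).CliqueFree 3 := by
  classical
  obtain ⟨x⟩ := ‹Nonempty α›
  refine fun h => h ({.inl x, .inr (x, a), .inr (x, b)} : Finset (α ⊕ α × β)) ?_
  rw [is3Clique_triple_iff]
  exact ⟨rfl, rfl, rfl, hab⟩

theorem coronaPow_succ_not_cliqueFree_three [Nonempty α] {a b : β} (hab : H.Adj a b) (l : ℕ) :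
    ¬(coronaPow G H (l + 1)).CliqueFree 3 :=
  haveI : Nonempty (coronaType α β l) := ⟨coronaBase β l (Classical.arbitrary α)⟩
  corona_not_cliqueFree_three hab

/-- The copy of `H` hanging at `v` is coloured by `P` with the `m` colours other than `C v`. -/
def Coloring.corona {m : ℕ} (C : G.Coloring (Fin (m + 1))) (P : H.Coloring (Fin m)) :
    (G.corona H).Coloring (Fin (m + 1)) :=
  Coloring.mk (Sum.elim C fun x => (C x.1).succAbove (P x.2)) <| by
    rintro (u | ⟨u, a⟩) (w | ⟨w, b⟩) hadj
    · exact C.valid hadj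
    · obtain rfl : u = w := hadj
      exact (Fin.succAbove_ne _ _).symm
    · obtain rfl : u = w := hadj
      exact Fin.succAbove_ne _ _
    · obtain ⟨rfl, hab⟩ : u = w ∧ H.Adj a b := hadj
      exact Fin.succAbove_right_injective.ne (P.valid hab)

def Coloring.coronaPow {m : ℕ} (C : G.Coloring (Fin (m + 1))) (P : H.Coloring (Fin m)) :
    ∀ l, (coronaPow G H l).Coloring (Fin (m + 1))
  | 0 => C
  | l + 1 => (C.coronaPow P l).corona P

end Corona

section ColorClassCard

variable {α β : Type u} [Fintype α] [Fintype β] {G : SimpleGraph α} {H : SimpleGraph β}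
  {m k : ℕ}

theorem card_filter_succAbove_eq {P : β → Fin m} (hP : ∀ e, #{b | P b = e} = k)
    (i j : Fin (m + 1)) : #{b | i.succAbove (P b) = j} = if i = j then 0 else k := by
  split_ifs with hij
  · subst hij
    simp [Fin.succAbove_ne]
  · obtain ⟨e, rfl⟩ := Fin.exists_succAbove_eq (Ne.symm hij)
    simpa only [Fin.succAbove_right_inj] using hP e

theorem Coloring.card_filter_corona_eq (C : G.Coloring (Fin (m + 1))) {P : H.Coloring (Fin m)}
    (hP : ∀ e, #{b | P b = e} = k) (j : Fin (m + 1)) :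
    #{x | C.corona P x = j} = #{v | C v = j} + k * (Fintype.card α - #{v | C v = j}) := by
  have hcopies :
      ∑ v, #{b | (C v).succAbove (P b) = j} = k * (Fintype.card α - #{v | C v = j}) := by
    classical
    simp only [card_filter_succAbove_eq hP, sum_ite, sum_const_zero, sum_const, smul_eq_mul,
      zero_add]
    rw [mul_comm, filter_not, card_sdiff_of_subset (filter_subset _ _), card_univ]
  rw [← hcopies, card_filter, Fintype.sum_sum_type, Fintype.sum_prod_type, card_filter]
  simp only [card_filter]
  rfl

theorem Coloring.card_filter_coronaPow_succ_eq (C : G.Coloring (Fin (m + 1)))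
    {P : H.Coloring (Fin m)} (hP : ∀ e, #{b | P b = e} = k) (l : ℕ) (j : Fin (m + 1)) :
    #{x | C.coronaPow P (l + 1) x = j} = #{x | C.coronaPow P l x = j} +
      k * (Fintype.card (coronaType α β l) - #{x | C.coronaPow P l x = j}) :=
  (C.coronaPow P l).card_filter_corona_eq hP j

theorem Coloring.card_filter_coronaPow_eq_of_forall_eq (C : G.Coloring (Fin (m + 1)))
    {P : H.Coloring (Fin m)} (hP : ∀ e, #{b | P b = e} = k)
    (hC : ∀ i j, #{v | C v = i} = #{v | C v = j}) :
    ∀ l i j, #{x | C.coronaPow P l x = i} = #{x | C.coronaPow P l x = j}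
  | 0 => hC
  | l + 1 => fun i j => by
    rw [C.card_filter_coronaPow_succ_eq hP, C.card_filter_coronaPow_succ_eq hP,
      C.card_filter_coronaPow_eq_of_forall_eq hP hC l i j]

theorem Coloring.card_filter_coronaPow_le_of_le_two (C : G.Coloring (Fin (m + 1)))
    {P : H.Coloring (Fin m)} (hP : ∀ e, #{b | P b = e} = k) (hk : k ≤ 2)
    (hC : ∀ i j, #{v | C v = i} ≤ #{v | C v = j} + 1) :
    ∀ l i j, #{x | C.coronaPow P l x = i} ≤ #{x | C.coronaPow P l x = j} + 1
  | 0 => hC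
  | l + 1 => fun i j => by
    rw [C.card_filter_coronaPow_succ_eq hP, C.card_filter_coronaPow_succ_eq hP]
    have := C.card_filter_coronaPow_le_of_le_two hP hk hC l i j
    have := C.card_filter_coronaPow_le_of_le_two hP hk hC l j i
    have := card_le_univ ({x | C.coronaPow P l x = i} : Finset _)
    have := card_le_univ ({x | C.coronaPow P l x = j} : Finset _)
    interval_cases k <;> omega

end ColorClassCard

theorem cycleGraph_adj_val_mod_two_ne {n : ℕ} (hn : Even n) {u v : Fin n}
    (h : (cycleGraph n).Adj u v) : u.val % 2 ≠ v.val % 2 := by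
  obtain _ | _ | n := n
  · exact v.elim0
  · simp at hn
  have succ_mod_two : ∀ w : Fin (n + 2), (w + 1).val % 2 ≠ w.val % 2 := fun w => by
    rw [Fin.val_add, Fin.val_one, Nat.mod_mod_of_dvd _ (even_iff_two_dvd.1 hn)]
    omega
  rcases cycleGraph_adj.1 h with h | h
  · rw [sub_eq_iff_eq_add'.1 h]
    exact succ_mod_two v
  · rw [sub_eq_iff_eq_add'.1 h]
    exact (succ_mod_two u).symm

def evenCycleColoring (k : ℕ) : (cycleGraph (2 * k)).Coloring (Fin 2) :=
  Coloring.mk (fun a => ⟨a.val % 2, Nat.mod_lt _ two_pos⟩) fun h =>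
    Fin.ne_of_val_ne (cycleGraph_adj_val_mod_two_ne (even_two_mul _) h)

theorem card_filter_evenCycleColoring_eq (k : ℕ) (e : Fin 2) :
    #{a | evenCycleColoring k a = e} = k := by
  have hval (a : Fin (2 * k)) : evenCycleColoring k a = e ↔ a.val % 2 = e.val := Fin.ext_iff
  simp only [hval]
  rw [card_filter, Fin.sum_univ_eq_sum_range (fun x => if x % 2 = e.val then 1 else 0),
    ← card_filter, ← Nat.count_eq_card_filter_range]
  simpa [Nat.ModEq, Nat.mod_eq_of_lt e.isLt] using Nat.count_modEq_card (2 * k) two_pos e.val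

section Equitable

variable {V : Type*} [Fintype V] {G : SimpleGraph V} {k : ℕ}

theorem Coloring.isEquitableColoring_iff (C : G.Coloring (Fin k)) :
    G.IsEquitableColoring C ↔ ∀ i j, #{v | C v = i} ≤ #{v | C v = j} + 1 :=
  ⟨And.right, fun h => ⟨fun _ _ => C.valid, h⟩⟩

theorem card_filter_eq_of_three_dvd (c : V → Fin 3)
    (hc : ∀ i j, #{v | c v = i} ≤ #{v | c v = j} + 1) (h3 : 3 ∣ Fintype.card V) (i j : Fin 3) :
    #{v | c v = i} = #{v | c v = j} := by
  have hsum : Fintype.card V = ∑ i, #{v | c v = i} := card_eq_sum_card_fiberwise (by simp)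
  rw [Fin.sum_univ_three] at hsum
  have := hc 0 1; have := hc 1 0; have := hc 0 2; have := hc 2 0; have := hc 1 2; have := hc 2 1
  fin_cases i <;> fin_cases j <;>
    simp only [Fin.zero_eta, Fin.mk_one, Fin.reduceFinMk, Fin.isValue] <;> omega

theorem equitableChromaticNumber_eq_of_isLeast (h : IsLeast {k | G.EquitablyColorable k} k) :
    G.equitableChromaticNumber = k :=
  h.csInf_eq

theorem EquitablyColorable.colorable (h : G.EquitablyColorable k) : G.Colorable k :=
  let ⟨c, hc, _⟩ := h
  ⟨Coloring.mk c fun h => hc h⟩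

end Equitable

end SimpleGraph

/-- If `G` is equitably 3-colorable on `n ≥ 2` vertices, `k ≥ 2`, `l ≥ 1`,
and `3 ∣ n` or `k = 2`, then `χ₌(G ∘^l C_{2k}) = 3`. -/
theorem equitableChromaticNumber_coronaPow_evenCycle_eq_three
    {α : Type} [Fintype α] (G : SimpleGraph α) (n k l : ℕ)
    (hn : Fintype.card α = n) (hn2 : 2 ≤ n) (hG : G.EquitablyColorable 3)
    (hk : 2 ≤ k) (hl : 1 ≤ l) (h : 3 ∣ n ∨ k = 2) :
    (coronaPow G (cycleGraph (2 * k)) l).equitableChromaticNumber = 3 := by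
  obtain ⟨c, hc⟩ := hG
  let C : G.Coloring (Fin 3) := Coloring.mk c fun h => hc.1 h
  have hP := card_filter_evenCycleColoring_eq k
  have hCl : (coronaPow G (cycleGraph (2 * k)) l).IsEquitableColoring
      (C.coronaPow (evenCycleColoring k) l) := by
    refine (Coloring.isEquitableColoring_iff _).2 fun i j => ?_
    rcases h with h3 | rfl
    · rw [Coloring.card_filter_coronaPow_eq_of_forall_eq C hP
        (card_filter_eq_of_three_dvd c hc.2 (hn ▸ h3)) l i j]
      exact Nat.le_succ _
    · exact Coloring.card_filter_coronaPow_le_of_le_two C hP le_rfl hc.2 l i j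
  refine equitableChromaticNumber_eq_of_isLeast ⟨⟨_, hCl⟩, fun m hm => ?_⟩
  obtain ⟨l, rfl⟩ := Nat.exists_eq_add_of_le' hl
  have : Nonempty α := Fintype.card_pos_iff.1 (by omega)
  have hadj : (cycleGraph (2 * k)).Adj ⟨0, by omega⟩ ⟨1, by omega⟩ := by
    refine cycleGraph_adj'.2 (Or.inr ?_)
    rw [Fin.coe_sub_iff_le.2 (Fin.mk_le_mk.2 (Nat.zero_le 1))]
    rfl
  by_contra! hm3
  exact coronaPow_succ_not_cliqueFree_three hadj l (hm.colorable.cliqueFree hm3)
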